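/- arXiv:2604.00539 — 2 statements merged into one kernel-verified Lean document; each statement's English description precedes it below -/
import Mathlib

section
/- In a field, let $n, s, w$ be nonzero elements with $s \ne 1$, and let $b_1, b_1', b_2$ be elements satisfying the constraint $(1 - s^{-1}) b_1' + (w - 1) b_1 = s^{-1}(n^{-1} - 1)$. Then $b_1 - b_1 b_2 + b_1' b_2 = b_1 + \frac{1 - n^{-1}}{1 - s}\, b_2 + \frac{s^{-1} - w}{1 - s^{-1}}\, b_1 b_2$. -/
/-! The constraint is linear in `b₁'` with coefficient `1 - s⁻¹ ≠ 0`; solving it for `b₁'` and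
substituting gives the right-hand side, once `s⁻¹ (n⁻¹ - 1) / (1 - s⁻¹)` is recognised as
`(1 - n⁻¹) / (1 - s)`. -/

theorem inv_mul_div_one_sub_inv {K : Type*} [Field K] {s : K} (hs : s ≠ 0) (a : K) :
    s⁻¹ * a / (1 - s⁻¹) = a / (s - 1) := by
  rw [← mul_div_mul_left _ _ hs, ← mul_assoc, mul_inv_cancel₀ hs, one_mul, mul_sub, mul_one,
    mul_inv_cancel₀ hs]

theorem vertical_composition_formula_general {K : Type*} [Field K] (n s w : K)
    (hs : s ≠ 0) (hs1 : s ≠ 1) (b₁ b₁' b₂ : K)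
    (hconstraint : (1 - s⁻¹) * b₁' + (w - 1) * b₁ = s⁻¹ * (n⁻¹ - 1)) :
    b₁ - b₁ * b₂ + b₁' * b₂
      = b₁ + (1 - n⁻¹) / (1 - s) * b₂ + (s⁻¹ - w) / (1 - s⁻¹) * (b₁ * b₂) := by
  have hc : 1 - s⁻¹ ≠ 0 := sub_ne_zero.2 (by rwa [ne_comm, ne_eq, inv_eq_one])
  have hb₁' : b₁' = (s⁻¹ * (n⁻¹ - 1) - (w - 1) * b₁) / (1 - s⁻¹) := by
    rw [eq_div_iff hc]
    linear_combination hconstraint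
  have hcoeff : (1 - n⁻¹) / (1 - s) = s⁻¹ * (n⁻¹ - 1) / (1 - s⁻¹) := by
    rw [inv_mul_div_one_sub_inv hs, ← neg_sub s, div_neg, ← neg_div, neg_sub]
  rw [hb₁', hcoeff]
  field_simp
  ring

theorem vertical_composition_formula {K : Type*} [Field K] (n s w : K)
    (hn : n ≠ 0) (hs : s ≠ 0) (hw : w ≠ 0) (hs1 : s ≠ 1) (b₁ b₁' b₂ : K)
    (hconstraint : (1 - s⁻¹) * b₁' + (w - 1) * b₁ = s⁻¹ * (n⁻¹ - 1)) :
    b₁ - b₁ * b₂ + b₁' * b₂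
      = b₁ + (1 - n⁻¹) / (1 - s) * b₂ + (s⁻¹ - w) / (1 - s⁻¹) * (b₁ * b₂) :=
  vertical_composition_formula_general n s w hs hs1 b₁ b₁' b₂ hconstraint
end

section
/- Let $t_1, t_2$ be units in a commutative ring, let $h_1, h_2$ be integers, and set $b_1 = (1 - t_2)[h_1]_{t_1 t_2} - 1$ and $b_2 = t_2(t_1^{-1} - 1)[h_2]_{t_1/t_2}$. If $t_1 \ne 1$ is such that $1 - t_1$ and $1 - t_1^{-1}$ are units, then $1 + \frac{1 - t_2^{-1}}{1 - t_1}\, b_1 b_2 + \frac{t_2^{-1} - t_1^{-1}}{1 - t_1^{-1}}\, b_2 = 1 + t_1^{-1}\big(1 - t_1 - (t_2 - 1)^2 [h_1]_{t_1 t_2}\big)[h_2]_{t_1/t_2}$. -/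
/-- The generalized quantum bracket `[k]_a` for a unit `a` in a commutative ring:
`[k]_a = 1 + a + ⋯ + a^(k-1)` for `k > 0`, `[0]_a = 0`, and
`[k]_a = -a^k (1 + a + ⋯ + a^(|k|-1))` for `k < 0`. -/
noncomputable def qbr {R : Type*} [CommRing R] (a : Rˣ) (k : ℤ) : R :=
  if 0 ≤ k then ∑ i ∈ Finset.range k.toNat, (a : R) ^ i
  else -(((a ^ k : Rˣ) : R) * ∑ i ∈ Finset.range (-k).toNat, (a : R) ^ i)

theorem double_twist_odd {R : Type*} [CommRing R] (t₁ t₂ : Rˣ) (h₁ h₂ : ℤ)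
    (hu1 : IsUnit (1 - (t₁ : R))) (hu2 : IsUnit (1 - ((t₁⁻¹ : Rˣ) : R))) :
    1 + (1 - ((t₂⁻¹ : Rˣ) : R)) * Ring.inverse (1 - (t₁ : R))
          * (((1 - (t₂ : R)) * qbr (t₁ * t₂) h₁ - 1)
              * ((t₂ : R) * (((t₁⁻¹ : Rˣ) : R) - 1) * qbr (t₁ * t₂⁻¹) h₂))
      + (((t₂⁻¹ : Rˣ) : R) - ((t₁⁻¹ : Rˣ) : R)) * Ring.inverse (1 - ((t₁⁻¹ : Rˣ) : R))
          * ((t₂ : R) * (((t₁⁻¹ : Rˣ) : R) - 1) * qbr (t₁ * t₂⁻¹) h₂)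
      = 1 + ((t₁⁻¹ : Rˣ) : R)
          * (1 - (t₁ : R) - ((t₂ : R) - 1) ^ 2 * qbr (t₁ * t₂) h₁) * qbr (t₁ * t₂⁻¹) h₂ := by
  set A := qbr (t₁ * t₂) h₁ with hA
  set B := qbr (t₁ * t₂⁻¹) h₂ with hB
  set u := Ring.inverse (1 - (t₁ : R)) with hu
  set v := Ring.inverse (1 - ((t₁⁻¹ : Rˣ) : R)) with hv
  set s := ((t₁⁻¹ : Rˣ) : R) with hsdef
  set q := ((t₂⁻¹ : Rˣ) : R) with hqdef
  have hR1 : u * (1 - (t₁ : R)) = 1 := Ring.inverse_mul_cancel _ hu1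
  have hR2 : v * (1 - s) = 1 := Ring.inverse_mul_cancel _ hu2
  have hR3 : s * (t₁ : R) = 1 := by
    rw [hsdef, ← Units.val_mul, inv_mul_cancel, Units.val_one]
  have hR4 : q * (t₂ : R) = 1 := by
    rw [hqdef, ← Units.val_mul, inv_mul_cancel, Units.val_one]
  linear_combination ((1 - q) * ((1 - (t₂ : R)) * A - 1) * (t₂ : R) * s * B) * hR1
    + (-(q - s) * (t₂ : R) * B) * hR2
    + ((1 - q) * u * ((1 - (t₂ : R)) * A - 1) * (t₂ : R) * B + B) * hR3
    + (-((1 - (t₂ : R)) * A - 1) * s * B - B) * hR4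
end
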